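/- Let n ≥ k+2 and suppose (s,t;n,k) is admissible. Suppose real numbers t₁ ∈ [0,(k+1)(n−k−1)], t₂ ∈ [0,k+1], s₁ ∈ [s,k] satisfy t₁ + t₂ = t. Then F(s₁,t₁;n−1,k) + max{F(s,t₂;k+1,k) − s₁, 0} ≥ F(s,t;n,k). -/

import Mathlib

/-! For `s = d + σ > 0` the index is `s` up to the threshold `(k - d - 1)(n - k)` and then
`s` plus a staircase in the excess, of period `d + 2`, whose steps are `min τ ((σ + τ)/2) 1`;
for `s = 0` it is `max 0 (t - k(n - k))`, which fits the same picture with `⌈s⌉₊ = 0`.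
Lowering `n` by one moves the threshold down by `c = k - ⌈s⌉₊`, so
`F(s,t;n,k) ≤ F(s,t - c;n-1,k)`. If `t₂ ≤ c`, monotonicity in `t` gives `F(s,t₁;n-1,k)`;
otherwise the excess `t₂ - c ≤ ⌈s⌉₊ + 1` is at most one period, and adding it raises the
staircase by at most `F(s,t₂;k+1,k) - s`. Finally `s ↦ F(s,t) - s` is monotone on `[0, ∞)`,
which replaces `s` by `s₁`: inside a band `(d, d+1]` only `σ` grows, and crossing an integer
trades `σ = 1` for a longer period and a lower threshold. -/

noncomputable def fIndex (n k : ℕ) (s t : ℝ) : ℝ :=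
  if s ≤ 0 then max 0 (t - k * (n - k : ℝ))
  else
    let d : ℤ := ⌈s⌉ - 1
    let σ : ℝ := s - d
    if t ≤ ((k : ℝ) - d - 1) * ((n : ℝ) - k) then s
    else
      let r : ℝ := t - ((k : ℝ) - d - 1) * ((n : ℝ) - k)
      let m : ℤ := ⌈r / ((d : ℝ) + 2)⌉ - 1
      let τ : ℝ := r - ((d : ℝ) + 2) * m
      if τ ≤ 2 then s + m + min τ (min ((σ + τ) / 2) 1)
      else s + m + 1

noncomputable def fIndexGain (σ τ : ℝ) : ℝ := min τ (min ((σ + τ) / 2) 1)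

noncomputable def fIndexStair (σ c x : ℝ) : ℝ :=
  ((⌈x / c⌉ - 1 : ℤ) : ℝ) + fIndexGain σ (x - c * ((⌈x / c⌉ - 1 : ℤ) : ℝ))

section Gain

variable {σ σ' τ h c : ℝ}

lemma fIndexGain_nonneg (hσ : 0 ≤ σ) (hτ : 0 ≤ τ) : 0 ≤ fIndexGain σ τ :=
  le_min hτ (le_min (by linarith) zero_le_one)

lemma fIndexGain_le_one : fIndexGain σ τ ≤ 1 :=
  min_le_of_right_le (min_le_right _ _)

lemma fIndexGain_mono (σ : ℝ) : Monotone (fIndexGain σ) := fun _ _ h =>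
  min_le_min h (min_le_min (by linarith) le_rfl)

lemma fIndexGain_le_fIndexGain_left (h : σ ≤ σ') : fIndexGain σ τ ≤ fIndexGain σ' τ :=
  min_le_min le_rfl (min_le_min (by linarith) le_rfl)

lemma fIndexGain_of_two_lt (hσ : 0 ≤ σ) (hτ : 2 < τ) : fIndexGain σ τ = 1 := by
  simp only [fIndexGain, min_def]; split_ifs <;> linarith

lemma fIndexGain_add_le (hσ : 0 ≤ σ) (hτ : 0 ≤ τ) (hh : 0 ≤ h) :
    fIndexGain σ (τ + h) ≤ fIndexGain σ τ + fIndexGain σ h := by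
  simp only [fIndexGain, min_def]; split_ifs <;> linarith

lemma one_add_fIndexGain_sub_le (hσ : 0 ≤ σ) (hc : 2 ≤ c) (hτ : τ ≤ c) (hh : h ≤ c)
    (hτh : c < τ + h) : 1 + fIndexGain σ (τ + h - c) ≤ fIndexGain σ τ + fIndexGain σ h := by
  simp only [fIndexGain, min_def]; split_ifs <;> linarith

lemma fIndexGain_one_le_fIndexGain_add_one (hσ : 0 ≤ σ) :
    fIndexGain 1 τ ≤ fIndexGain σ (τ + 1) := by
  simp only [fIndexGain, min_def]; split_ifs <;> linarith

lemma sub_le_fIndexGain (hc : 2 ≤ c) (hσ : 0 ≤ σ) (hτ : τ ≤ c) : τ - (c - 1) ≤ fIndexGain σ τ :=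
  le_min (by linarith) (le_min (by linarith) (by linarith))

end Gain

section Stair

variable {σ σ' c x y h : ℝ}

lemma exists_int_eq_mul_add (hc : 0 < c) (hx : 0 < x) :
    ∃ q : ℤ, 0 ≤ q ∧ ∃ ρ, 0 < ρ ∧ ρ ≤ c ∧ x = c * q + ρ := by
  obtain ⟨q, ⟨hρ0, hρc⟩, -⟩ := existsUnique_sub_zsmul_mem_Ioc hc x 0
  rw [zsmul_eq_mul, zero_add] at *
  refine ⟨q, ?_, _, hρ0, hρc, by ring⟩
  by_contra! hq
  have : (q : ℝ) ≤ -1 := by exact_mod_cast Int.le_sub_one_of_lt hq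
  nlinarith

lemma fIndexStair_eq (hc : 0 < c) (q : ℤ) {ρ : ℝ} (hρ0 : 0 < ρ) (hρc : ρ ≤ c) :
    fIndexStair σ c (c * q + ρ) = q + fIndexGain σ ρ := by
  have hceil : ⌈(c * q + ρ) / c⌉ = q + 1 := by
    rw [Int.ceil_eq_iff, Int.cast_add, Int.cast_one, add_sub_cancel_right, lt_div_iff₀ hc,
      div_le_iff₀ hc]
    constructor <;> nlinarith
  simp only [fIndexStair, hceil, add_sub_cancel_right, add_sub_cancel_left]

lemma int_add_one_le_of_mul_add_le {q K : ℤ} {ρ : ℝ} (hc : 0 < c) (hρ : 0 < ρ)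
    (hK : c * q + ρ ≤ c * K) : q + 1 ≤ K := by
  have hlt : c * q < c * K := by linarith
  have : (q : ℝ) < K := lt_of_mul_lt_mul_left hlt hc.le
  exact_mod_cast this

lemma fIndexStair_nonneg (hσ : 0 ≤ σ) (hc : 0 < c) (hx : 0 < x) : 0 ≤ fIndexStair σ c x := by
  obtain ⟨q, hq, ρ, hρ0, hρc, rfl⟩ := exists_int_eq_mul_add hc hx
  rw [fIndexStair_eq hc q hρ0 hρc]
  have : (0 : ℝ) ≤ q := by exact_mod_cast hq
  linarith [fIndexGain_nonneg hσ hρ0.le]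

lemma fIndexStair_mono (hσ : 0 ≤ σ) (hc : 0 < c) (hx : 0 < x) (hxy : x ≤ y) :
    fIndexStair σ c x ≤ fIndexStair σ c y := by
  obtain ⟨q, -, ρ, hρ0, hρc, rfl⟩ := exists_int_eq_mul_add hc hx
  obtain ⟨q', -, ρ', hρ0', hρc', rfl⟩ := exists_int_eq_mul_add hc (hx.trans_le hxy)
  rw [fIndexStair_eq hc q hρ0 hρc, fIndexStair_eq hc q' hρ0' hρc']
  have hqq' : q ≤ q' := by
    have := int_add_one_le_of_mul_add_le (q := q) (K := q' + 1) hc hρ0 (by push_cast; linarith)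
    omega
  rcases hqq'.eq_or_lt with rfl | hlt
  · gcongr
    exact fIndexGain_mono σ (by linarith)
  · have : (q : ℝ) + 1 ≤ q' := by exact_mod_cast hlt
    linarith [fIndexGain_le_one (σ := σ) (τ := ρ), fIndexGain_nonneg hσ hρ0'.le]

lemma fIndexStair_le_fIndexStair_left (h : σ ≤ σ') : fIndexStair σ c x ≤ fIndexStair σ' c x := by
  unfold fIndexStair
  grw [fIndexGain_le_fIndexGain_left h]

lemma sub_le_fIndexStair (hσ : 0 ≤ σ) (hc : 2 ≤ c) (hx : 0 < x) {K : ℤ} (hK : x ≤ c * K) :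
    x - (c - 1) * K ≤ fIndexStair σ c x := by
  have hc0 : 0 < c := by linarith
  obtain ⟨q, -, ρ, hρ0, hρc, rfl⟩ := exists_int_eq_mul_add hc0 hx
  rw [fIndexStair_eq hc0 q hρ0 hρc]
  have hqK : (q : ℝ) + 1 ≤ K := by exact_mod_cast int_add_one_le_of_mul_add_le hc0 hρ0 hK
  nlinarith [sub_le_fIndexGain hc hσ hρc]

lemma fIndexStair_add_le (hσ : 0 ≤ σ) (hc : 2 ≤ c) (hx : 0 < x) (hh0 : 0 ≤ h) (hhc : h ≤ c) :
    fIndexStair σ c (x + h) ≤ fIndexStair σ c x + fIndexGain σ h := by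
  have hc0 : 0 < c := by linarith
  obtain ⟨q, -, ρ, hρ0, hρc, rfl⟩ := exists_int_eq_mul_add hc0 hx
  rw [fIndexStair_eq hc0 q hρ0 hρc]
  rcases le_or_gt (ρ + h) c with hρh | hρh
  · rw [add_assoc, fIndexStair_eq hc0 q (by linarith) hρh]
    linarith [fIndexGain_add_le hσ hρ0.le hh0]
  · have hcarry : c * q + ρ + h = c * ((q + 1 : ℤ) : ℝ) + (ρ + h - c) := by push_cast; ring
    rw [hcarry, fIndexStair_eq hc0 _ (by linarith) (by linarith)]
    push_cast
    linarith [one_add_fIndexGain_sub_le hσ hc hρc hhc hρh]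

lemma fIndexStair_one_le_fIndexStair_add (hσ : 0 ≤ σ) (hc : 0 < c) (hx : 0 < x) {K : ℤ}
    (hK : x ≤ c * K) : fIndexStair 1 c x ≤ fIndexStair σ (c + 1) (x + K) := by
  obtain ⟨q, hq, ρ, hρ0, hρc, rfl⟩ := exists_int_eq_mul_add hc hx
  have hqK : (q : ℝ) + 1 ≤ K := by exact_mod_cast int_add_one_le_of_mul_add_le hc hρ0 hK
  have hq' : (0 : ℝ) ≤ q := by exact_mod_cast hq
  calc fIndexStair 1 c (c * q + ρ) = q + fIndexGain 1 ρ := fIndexStair_eq hc q hρ0 hρc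
    _ ≤ q + fIndexGain σ (ρ + 1) := by grw [fIndexGain_one_le_fIndexGain_add_one hσ]
    _ = fIndexStair σ (c + 1) ((c + 1) * q + (ρ + 1)) :=
      (fIndexStair_eq (by linarith) q (by linarith) (by linarith)).symm
    _ ≤ fIndexStair σ (c + 1) (c * q + ρ + K) :=
      fIndexStair_mono hσ (by linarith) (by positivity) (by linarith)

end Stair

section FIndex

variable {n k : ℕ} {s s₁ t h : ℝ}

lemma fIndex_zero (n k : ℕ) (t : ℝ) : fIndex n k 0 t = max 0 (t - k * ((n : ℝ) - k)) :=
  if_pos le_rfl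

lemma exists_natCeil_eq_add_one (hs : 0 < s) :
    ∃ d : ℕ, (d : ℝ) < s ∧ s ≤ d + 1 ∧ ⌈s⌉₊ = d + 1 := by
  obtain ⟨d, hd⟩ := Nat.exists_eq_add_one_of_ne_zero (Nat.ceil_pos.2 hs).ne'
  refine ⟨d, Nat.lt_ceil.1 (by omega), ?_, hd⟩
  exact_mod_cast hd ▸ Nat.le_ceil s

lemma int_ceil_sub_one_eq {d : ℕ} (hd : (d : ℝ) < s) (hsd : s ≤ d + 1) : ⌈s⌉ - 1 = (d : ℤ) := by
  rw [sub_eq_iff_eq_add, Int.ceil_eq_iff]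
  push_cast
  constructor <;> linarith

lemma fIndex_of_le_threshold {d : ℕ} (hd : (d : ℝ) < s) (hsd : s ≤ d + 1)
    (ht : t ≤ ((k : ℝ) - d - 1) * ((n : ℝ) - k)) : fIndex n k s t = s := by
  have hs : ¬ s ≤ 0 := by linarith [d.cast_nonneg (α := ℝ)]
  simp only [fIndex, int_ceil_sub_one_eq hd hsd, Int.cast_natCast, if_neg hs, if_pos ht]

lemma fIndex_of_threshold_lt {d : ℕ} (hd : (d : ℝ) < s) (hsd : s ≤ d + 1)
    (ht : ((k : ℝ) - d - 1) * ((n : ℝ) - k) < t) :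
    fIndex n k s t =
      s + fIndexStair (s - d) (d + 2) (t - ((k : ℝ) - d - 1) * ((n : ℝ) - k)) := by
  have hs : ¬ s ≤ 0 := by linarith [d.cast_nonneg (α := ℝ)]
  simp only [fIndex, int_ceil_sub_one_eq hd hsd, Int.cast_natCast, if_neg hs, if_neg (not_le.2 ht),
    fIndexStair]
  split_ifs with hτ
  · simp only [fIndexGain]; ring
  · rw [fIndexGain_of_two_lt (by linarith) (not_le.1 hτ)]; ring

lemma le_fIndex (hs : 0 ≤ s) : s ≤ fIndex n k s t := by
  rcases hs.eq_or_lt with rfl | hs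
  · exact (fIndex_zero n k t).symm ▸ le_max_left _ _
  obtain ⟨d, hd, hsd, -⟩ := exists_natCeil_eq_add_one hs
  by_cases ht : t ≤ ((k : ℝ) - d - 1) * ((n : ℝ) - k)
  · exact (fIndex_of_le_threshold hd hsd ht).ge
  · rw [fIndex_of_threshold_lt hd hsd (not_le.1 ht)]
    linarith [fIndexStair_nonneg (σ := s - d) (c := d + 2) (by linarith) (by positivity)
      (by linarith : 0 < t - ((k : ℝ) - d - 1) * ((n : ℝ) - k))]

lemma fIndex_mono (hs : 0 ≤ s) : Monotone (fIndex n k s) := by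
  intro t t' htt'
  rcases hs.eq_or_lt with rfl | hs
  · simp only [fIndex_zero]
    gcongr
  obtain ⟨d, hd, hsd, -⟩ := exists_natCeil_eq_add_one hs
  set T : ℝ := ((k : ℝ) - d - 1) * ((n : ℝ) - k)
  by_cases ht' : t' ≤ T
  · rw [fIndex_of_le_threshold hd hsd ht', fIndex_of_le_threshold hd hsd (htt'.trans ht')]
  by_cases ht : t ≤ T
  · rw [fIndex_of_le_threshold hd hsd ht]
    exact le_fIndex hs.le
  rw [fIndex_of_threshold_lt hd hsd (not_le.1 ht), fIndex_of_threshold_lt hd hsd (not_le.1 ht')]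
  grw [fIndexStair_mono (by linarith) (by positivity) (by linarith) (sub_le_sub_right htt' T)]

lemma add_sub_le_fIndex (hkn : k ≤ n) (hs : 0 ≤ s) (ht : t ≤ (k + 1) * ((n : ℝ) - k)) :
    s + (t - k * ((n : ℝ) - k)) ≤ fIndex n k s t := by
  have hnk : (0 : ℝ) ≤ (n : ℝ) - k := sub_nonneg.2 (by exact_mod_cast hkn)
  rcases hs.eq_or_lt with rfl | hs
  · rw [fIndex_zero, zero_add]
    exact le_max_right _ _
  obtain ⟨d, hd, hsd, -⟩ := exists_natCeil_eq_add_one hs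
  by_cases ht' : t ≤ ((k : ℝ) - d - 1) * ((n : ℝ) - k)
  · rw [fIndex_of_le_threshold hd hsd ht']
    nlinarith [d.cast_nonneg (α := ℝ)]
  rw [fIndex_of_threshold_lt hd hsd (not_le.1 ht')]
  have := sub_le_fIndexStair (σ := s - d) (c := d + 2) (K := (n : ℤ) - k)
    (x := t - ((k : ℝ) - d - 1) * ((n : ℝ) - k)) (by linarith)
    (by linarith [d.cast_nonneg (α := ℝ)]) (by linarith) (by push_cast; linarith)
  push_cast at this
  linarith

lemma fIndex_le_fIndex_pred (hn : 1 ≤ n) (hs : 0 ≤ s) :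
    fIndex n k s t ≤ fIndex (n - 1) k s (t - ((k : ℝ) - ⌈s⌉₊)) := by
  have hn' : ((n - 1 : ℕ) : ℝ) = n - 1 := by rw [Nat.cast_sub hn, Nat.cast_one]
  rcases hs.eq_or_lt with rfl | hs
  · rw [fIndex_zero, fIndex_zero, Nat.ceil_zero, hn']
    apply le_of_eq
    ring_nf
  obtain ⟨d, hd, hsd, hceil⟩ := exists_natCeil_eq_add_one hs
  by_cases ht : t ≤ ((k : ℝ) - d - 1) * ((n : ℝ) - k)
  · rw [fIndex_of_le_threshold hd hsd ht]
    exact le_fIndex hs.le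
  have hshift : t - ((k : ℝ) - ⌈s⌉₊) - ((k : ℝ) - d - 1) * (((n - 1 : ℕ) : ℝ) - k) =
      t - ((k : ℝ) - d - 1) * ((n : ℝ) - k) := by
    rw [hceil, hn']; push_cast; ring
  rw [fIndex_of_threshold_lt hd hsd (not_le.1 ht),
    fIndex_of_threshold_lt hd hsd (sub_pos.1 (hshift ▸ sub_pos.2 (not_le.1 ht))), hshift]

lemma fIndex_add_le_add_fIndexGain {d : ℕ} (hd : (d : ℝ) < s) (hsd : s ≤ d + 1) (hh0 : 0 ≤ h)
    (hhd : h ≤ d + 2) : fIndex n k s (t + h) ≤ fIndex n k s t + fIndexGain (s - d) h := by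
  have hG := fIndexGain_nonneg (σ := s - d) (by linarith) hh0
  set T : ℝ := ((k : ℝ) - d - 1) * ((n : ℝ) - k)
  by_cases hth : t + h ≤ T
  · rw [fIndex_of_le_threshold hd hsd hth, fIndex_of_le_threshold hd hsd (by linarith)]
    linarith
  rw [fIndex_of_threshold_lt hd hsd (not_le.1 hth)]
  by_cases ht : t ≤ T
  · rw [fIndex_of_le_threshold hd hsd ht]
    have hx : t + h - T = (d + 2) * ((0 : ℤ) : ℝ) + (t + h - T) := by push_cast; ring
    rw [hx, fIndexStair_eq (by positivity) 0 (by linarith) (by linarith)]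
    grw [fIndexGain_mono (s - d) (show t + h - T ≤ h by linarith)]
    push_cast
    linarith
  rw [fIndex_of_threshold_lt hd hsd (not_le.1 ht), show t + h - T = t - T + h by ring]
  grw [fIndexStair_add_le (by linarith) (by linarith [d.cast_nonneg (α := ℝ)]) (by linarith) hh0
    hhd]
  linarith

lemma fIndex_succ_eq_add_fIndexGain {d : ℕ} (hd : (d : ℝ) < s) (hsd : s ≤ d + 1) (hh0 : 0 < h)
    (hhd : h ≤ d + 2) : fIndex (k + 1) k s (k - (d + 1) + h) = s + fIndexGain (s - d) h := by
  have hT : ((k : ℝ) - d - 1) * (((k + 1 : ℕ) : ℝ) - k) = k - (d + 1) := by push_cast; ring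
  rw [fIndex_of_threshold_lt hd hsd (by linarith), hT,
    show (k : ℝ) - (d + 1) + h - (k - (d + 1)) = (d + 2) * ((0 : ℤ) : ℝ) + h by push_cast; ring,
    fIndexStair_eq (by positivity) 0 hh0 hhd]
  push_cast
  ring

lemma fIndex_add_le (hs : 0 ≤ s) (hh0 : 0 ≤ h) (hh : h ≤ ⌈s⌉₊ + 1) :
    fIndex n k s (t + h) ≤ fIndex n k s t + (fIndex (k + 1) k s (k - ⌈s⌉₊ + h) - s) := by
  rcases hs.eq_or_lt with rfl | hs
  · have hsucc : fIndex (k + 1) k 0 (k - ⌈(0 : ℝ)⌉₊ + h) = h := by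
      rw [fIndex_zero, Nat.ceil_zero]
      push_cast
      ring_nf
      exact max_eq_right hh0
    rw [hsucc, fIndex_zero, fIndex_zero, sub_zero, max_le_iff]
    constructor <;> linarith [le_max_left 0 (t - k * ((n : ℝ) - k)),
      le_max_right 0 (t - k * ((n : ℝ) - k))]
  obtain ⟨d, hd, hsd, hceil⟩ := exists_natCeil_eq_add_one hs
  rw [hceil] at hh ⊢
  push_cast at hh ⊢
  rcases hh0.eq_or_lt with rfl | hh0
  · rw [add_zero, add_zero]
    linarith [le_fIndex (n := k + 1) (k := k) (t := k - (d + 1)) hs.le]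
  rw [fIndex_succ_eq_add_fIndexGain hd hsd hh0 (by linarith), add_sub_cancel_left]
  exact fIndex_add_le_add_fIndexGain hd hsd hh0.le (by linarith)

lemma fIndex_sub_monotoneOn_Ioc (n k : ℕ) (t : ℝ) (d : ℕ) :
    MonotoneOn (fun s => fIndex n k s t - s) (Set.Ioc (d : ℝ) (d + 1)) := by
  rintro s ⟨hd, hsd⟩ s₁ ⟨hd₁, hsd₁⟩ hss
  dsimp only
  by_cases ht : t ≤ ((k : ℝ) - d - 1) * ((n : ℝ) - k)
  · rw [fIndex_of_le_threshold hd hsd ht, fIndex_of_le_threshold hd₁ hsd₁ ht, sub_self, sub_self]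
  rw [fIndex_of_threshold_lt hd hsd (not_le.1 ht), fIndex_of_threshold_lt hd₁ hsd₁ (not_le.1 ht),
    add_sub_cancel_left, add_sub_cancel_left]
  exact fIndexStair_le_fIndexStair_left (by linarith)

lemma fIndex_zero_le_sub (hkn : k ≤ n) (ht : t ≤ (k + 1) * ((n : ℝ) - k)) (hs₁ : 0 ≤ s₁) :
    fIndex n k 0 t ≤ fIndex n k s₁ t - s₁ := by
  rw [fIndex_zero]
  exact max_le (by linarith [le_fIndex (n := n) (k := k) (t := t) hs₁])
    (by linarith [add_sub_le_fIndex hkn hs₁ ht])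

-- Crossing the integer `d + 1` lowers the threshold by `n - k` and lengthens the period by one.
lemma fIndex_add_one_sub_le (hkn : k ≤ n) (ht : t ≤ (k + 1) * ((n : ℝ) - k)) {d : ℕ}
    (hd : (d : ℝ) + 1 < s₁) (hsd : s₁ ≤ d + 2) :
    fIndex n k (d + 1) t - (d + 1) ≤ fIndex n k s₁ t - s₁ := by
  have hnk : (0 : ℝ) ≤ (n : ℝ) - k := sub_nonneg.2 (by exact_mod_cast hkn)
  have hd' : (d : ℝ) < d + 1 := by linarith
  set T : ℝ := ((k : ℝ) - d - 1) * ((n : ℝ) - k)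
  by_cases hT : t ≤ T
  · rw [fIndex_of_le_threshold hd' le_rfl hT, sub_self]
    linarith [le_fIndex (n := n) (k := k) (t := t) (s := s₁) (by linarith [d.cast_nonneg (α := ℝ)])]
  have hT₁ : ((k : ℝ) - ↑(d + 1) - 1) * ((n : ℝ) - k) < t := by push_cast; nlinarith
  have hlow : fIndex n k (d + 1) t - (d + 1) = fIndexStair 1 (d + 2) (t - T) := by
    rw [fIndex_of_threshold_lt hd' le_rfl (not_le.1 hT)]
    simp only [T, add_sub_cancel_left]
  have hup : fIndex n k s₁ t - s₁ =
      fIndexStair (s₁ - ↑(d + 1)) (d + 2 + 1) (t - T + ((n : ℤ) - k : ℤ)) := by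
    rw [fIndex_of_threshold_lt (by push_cast; linarith) (by push_cast; linarith) hT₁,
      add_sub_cancel_left]
    simp only [T]
    push_cast
    ring_nf
  rw [hlow, hup]
  exact fIndexStair_one_le_fIndexStair_add (by push_cast; linarith) (by positivity)
    (by linarith) (by push_cast; linarith)

lemma fIndex_natCast_sub_le (hkn : k ≤ n) (ht : t ≤ (k + 1) * ((n : ℝ) - k)) {e : ℕ}
    (he : (e : ℝ) < s₁) (hs₁ : s₁ ≤ e + 1) : fIndex n k e t - e ≤ fIndex n k s₁ t - s₁ := by
  cases e with
  | zero => simpa using fIndex_zero_le_sub hkn ht (s₁ := s₁) (by simp at he; linarith)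
  | succ d =>
    push_cast at he hs₁ ⊢
    exact fIndex_add_one_sub_le hkn ht he (by linarith)

lemma fIndex_sub_monotoneOn (hkn : k ≤ n) (ht : t ≤ (k + 1) * ((n : ℝ) - k)) :
    MonotoneOn (fun s => fIndex n k s t - s) (Set.Ici 0) := by
  have hnat : Monotone (fun e : ℕ => fIndex n k e t - e) := monotone_nat_of_le_succ fun e =>
    fIndex_natCast_sub_le hkn ht (by push_cast; linarith) (by push_cast; rfl)
  intro s hs s₁ hs₁ hss
  rcases (Set.mem_Ici.1 hs₁).eq_or_lt with h0 | hpos₁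
  · rw [le_antisymm hss (h0 ▸ hs)]
  obtain ⟨d₁, hd₁, hsd₁, -⟩ := exists_natCeil_eq_add_one hpos₁
  have hlast := fIndex_natCast_sub_le hkn ht hd₁ hsd₁
  rcases (Set.mem_Ici.1 hs).eq_or_lt with rfl | hpos
  · simpa using (hnat (Nat.zero_le d₁)).trans hlast
  obtain ⟨d, hd, hsd, -⟩ := exists_natCeil_eq_add_one hpos
  have hdd₁ : d < d₁ + 1 := by exact_mod_cast (show (d : ℝ) < d₁ + 1 by linarith)
  rcases (Nat.lt_succ_iff.1 hdd₁).eq_or_lt with rfl | hlt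
  · exact fIndex_sub_monotoneOn_Ioc n k t d ⟨hd, hsd⟩ ⟨hd₁, hsd₁⟩ hss
  calc fIndex n k s t - s ≤ fIndex n k ↑(d + 1) t - ↑(d + 1) :=
        fIndex_sub_monotoneOn_Ioc n k t d ⟨hd, hsd⟩ ⟨by push_cast; linarith, by push_cast; rfl⟩
          (by push_cast; exact hsd)
    _ ≤ fIndex n k d₁ t - d₁ := hnat hlt
    _ ≤ fIndex n k s₁ t - s₁ := hlast

end FIndex

theorem stmt_13_general (n k : ℕ) (hn : k + 2 ≤ n) (s t t₁ t₂ s₁ : ℝ)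
    (hs0 : 0 ≤ s) (ht1' : t₁ ≤ (k + 1) * ((n : ℝ) - k - 1)) (ht2' : t₂ ≤ (k : ℝ) + 1)
    (hs1 : s ≤ s₁) (hT : t₁ + t₂ = t) :
    fIndex n k s t ≤ fIndex (n - 1) k s₁ t₁ + max (fIndex (k + 1) k s t₂ - s₁) 0 := by
  have hn1 : ((n - 1 : ℕ) : ℝ) = n - 1 := by rw [Nat.cast_sub (by omega), Nat.cast_one]
  have hss₁ : fIndex (n - 1) k s t₁ - s ≤ fIndex (n - 1) k s₁ t₁ - s₁ :=
    fIndex_sub_monotoneOn (by omega) (by rw [hn1]; linarith) hs0 (hs0.trans hs1) hs1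
  set c : ℝ := (k : ℝ) - ⌈s⌉₊
  have hshift : fIndex n k s t ≤ fIndex (n - 1) k s (t - c) := fIndex_le_fIndex_pred (by omega) hs0
  rcases le_or_gt t₂ c with h₂ | h₂
  · have hmono := fIndex_mono (n := n - 1) (k := k) hs0 (show t - c ≤ t₁ by linarith)
    linarith [le_max_right (fIndex (k + 1) k s t₂ - s₁) 0]
  · have hadd := fIndex_add_le (n := n - 1) (k := k) (t := t₁) hs0 (h := t₂ - c) (by linarith)
      (by linarith)
    rw [show t₁ + (t₂ - c) = t - c by linarith, show c + (t₂ - c) = t₂ by ring] at hadd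
    linarith [le_max_left (fIndex (k + 1) k s t₂ - s₁) 0]

/-- Let `n ≥ k+2`, `(s,t;n,k)` admissible. If
`t₁ ∈ [0,(k+1)(n-k-1)]`, `t₂ ∈ [0,k+1]`, `s₁ ∈ [s,k]` satisfy `t₁ + t₂ = t`, then
`F(s₁,t₁;n-1,k) + max (F(s,t₂;k+1,k) - s₁) 0 ≥ F(s,t;n,k)`. -/
theorem stmt_13 (n k : ℕ) (hk1 : 1 ≤ k) (hn : k + 2 ≤ n) (s t t₁ t₂ s₁ : ℝ)
    (hs0 : 0 ≤ s) (hsk : s ≤ k) (ht0 : 0 ≤ t) (ht : t ≤ (k + 1) * ((n : ℝ) - k))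
    (ht1 : 0 ≤ t₁) (ht1' : t₁ ≤ (k + 1) * ((n : ℝ) - k - 1))
    (ht2 : 0 ≤ t₂) (ht2' : t₂ ≤ (k : ℝ) + 1)
    (hs1 : s ≤ s₁) (hs1' : s₁ ≤ k) (hT : t₁ + t₂ = t) :
    fIndex n k s t ≤ fIndex (n - 1) k s₁ t₁ + max (fIndex (k + 1) k s t₂ - s₁) 0 :=
  stmt_13_general n k hn s t t₁ t₂ s₁ hs0 ht1' ht2' hs1 hT
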